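/- arXiv:1908.02376 — 3 statements merged into one kernel-verified Lean document; each statement's English description precedes it below -/
import Mathlib

section
/- Let A ∈ ℝ^{m×n} with rows aⁱ, b ∈ ℝᵐ, X = {x : Ax ≥ b}, data points x̂¹,…,x̂ᴷ ∈ ℝⁿ, threshold τ ≥ 0, and θ ∈ [0,1]. Suppose there is a set Ā ⊆ {1,…,m}, a set S̄ ⊆ {1,…,K} with |S̄| ≥ θK, and for each k ∈ S̄ a point x̄ᵏ ∈ X with (aⁱ)ᵀx̄ᵏ = bᵢ for all i ∈ Ā and ‖x̄ᵏ − x̂ᵏ‖ ≤ τ. Then for every c ∈ cone({aⁱ : i ∈ Ā}), there exist y ∈ ℝᵐ with y ≥ 0, Aᵀy = c, and vectors εᵏ (k ∈ S̄) with ‖εᵏ‖ ≤ τ, A(x̂ᵏ − εᵏ) ≥ b, and cᵀ(x̂ᵏ − εᵏ) = bᵀy for all k ∈ S̄. -/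
open Matrix

/-- Lemma 1 (feasibility of conic combinations for QIO): if there is a subset
Ā of constraints and a subset S̄ of the data with |S̄| ≥ θK such that for each
k ∈ S̄ some feasible point x̄ᵏ makes all constraints in Ā active and lies within
τ of x̂ᵏ, then every c ∈ cone({aⁱ : i ∈ Ā}) is inverse-feasible: there are
duals y ≥ 0 with Aᵀy = c and perturbations εᵏ with ‖εᵏ‖ ≤ τ such that each
perturbed point is primal feasible and satisfies strong duality. -/
theorem qio_feasible_of_cone {m n K : ℕ}
    (A : Matrix (Fin m) (Fin n) ℝ) (b : Fin m → ℝ)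
    (xhat : Fin K → (Fin n → ℝ)) (τ θ : ℝ) (hτ : 0 ≤ τ)
    (hθ0 : 0 ≤ θ) (hθ1 : θ ≤ 1)
    (Abar : Finset (Fin m)) (S : Finset (Fin K))
    (hS : θ * K ≤ S.card)
    (xbar : Fin K → (Fin n → ℝ))
    (hfeas : ∀ k ∈ S, ∀ i, b i ≤ A.mulVec (xbar k) i)
    (hactive : ∀ k ∈ S, ∀ i ∈ Abar, A i ⬝ᵥ xbar k = b i)
    (hclose : ∀ k ∈ S, ‖xbar k - xhat k‖ ≤ τ) :
    ∀ c : Fin n → ℝ,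
      (∃ lam : Fin m → ℝ, (∀ i, 0 ≤ lam i) ∧ (∀ i ∉ Abar, lam i = 0) ∧
        c = ∑ i ∈ Abar, lam i • A i) →
      ∃ (y : Fin m → ℝ) (ε : Fin K → (Fin n → ℝ)),
        (∀ i, 0 ≤ y i) ∧ A.transpose.mulVec y = c ∧
        (∀ k ∈ S, ‖ε k‖ ≤ τ) ∧
        (∀ k ∈ S, ∀ i, b i ≤ A.mulVec (xhat k - ε k) i) ∧
        (∀ k ∈ S, c ⬝ᵥ (xhat k - ε k) = b ⬝ᵥ y) := by
  rintro c ⟨lam, hlam0, hlam_out, hc⟩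
  refine ⟨lam, fun k => xhat k - xbar k, hlam0, ?_, ?_, ?_, ?_⟩
  · funext j
    rw [hc]
    simp only [Matrix.mulVec, Matrix.transpose_apply, dotProduct,
      Finset.sum_apply, Pi.smul_apply, smul_eq_mul]
    rw [← Finset.sum_subset (Finset.subset_univ Abar)
      (fun i _ hi => by rw [hlam_out i hi, mul_zero])]
    exact Finset.sum_congr rfl (fun i _ => mul_comm _ _)
  · intro k hk
    show ‖xhat k - xbar k‖ ≤ τ
    rw [norm_sub_rev]
    exact hclose k hk
  · intro k hk i
    have hx : xhat k - (xhat k - xbar k) = xbar k := by abel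
    rw [hx]
    exact hfeas k hk i
  · intro k hk
    have hx : xhat k - (xhat k - xbar k) = xbar k := by abel
    rw [hx, hc]
    have h1 : (∑ i ∈ Abar, lam i • A i) ⬝ᵥ xbar k
        = ∑ i ∈ Abar, lam i * (A i ⬝ᵥ xbar k) := by
      simp only [dotProduct, Finset.sum_apply, Pi.smul_apply,
        smul_eq_mul, Finset.sum_mul]
      rw [Finset.sum_comm]
      exact Finset.sum_congr rfl (fun i _ =>
        by rw [Finset.mul_sum]; exact Finset.sum_congr rfl (fun j _ => mul_assoc _ _ _))
    rw [h1]
    have h2 : b ⬝ᵥ lam = ∑ i ∈ Abar, lam i * b i := by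
      rw [dotProduct,
        ← Finset.sum_subset (Finset.subset_univ Abar)
          (fun i _ hi => by rw [hlam_out i hi, mul_zero])]
      exact Finset.sum_congr rfl (fun i _ => mul_comm _ _)
    rw [h2]
    exact Finset.sum_congr rfl (fun i hi => by rw [hactive k hk i hi])
end

section
/- Let A ∈ ℝ^{m×n} with rows aⁱ, b ∈ ℝᵐ, data x̂¹,…,x̂ᴷ ∈ ℝⁿ, τ ≥ 0, θ ∈ [0,1]. Suppose (c, {εᵏ}, y, S) is feasible for the quantile inverse problem: Aᵀy = c, y ≥ 0, and for all k ∈ S ⊆ {1,…,K} with |S| ≥ θK we have A(x̂ᵏ − εᵏ) ≥ b, cᵀ(x̂ᵏ − εᵏ) = bᵀy, and ‖εᵏ‖ ≤ τ; moreover c ≠ 0. Then there exists an index ĩ ∈ {1,…,m} such that (c̃, {εᵏ}, ỹ, S) with c̃ = a^{ĩ} and ỹ = e_{ĩ} (the ĩ-th standard unit vector) is also feasible for the same problem. -/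
open Matrix

/-- Proposition 2: if (c, {εᵏ}, y, S) is feasible for the quantile inverse
problem and c ≠ 0, then there is an index ĩ such that the cost vector c̃ = a^ĩ
together with the dual ỹ = e_ĩ (and the same εᵏ and S) is also feasible. -/
theorem qio_feasible_row {m n K : ℕ}
    (A : Matrix (Fin m) (Fin n) ℝ) (b : Fin m → ℝ)
    (xhat : Fin K → (Fin n → ℝ)) (τ θ : ℝ)
    (c : Fin n → ℝ) (y : Fin m → ℝ) (ε : Fin K → (Fin n → ℝ))
    (S : Finset (Fin K))
    (hdual : A.transpose.mulVec y = c) (hy : ∀ i, 0 ≤ y i)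
    (hfeas : ∀ k ∈ S, ∀ i, b i ≤ A.mulVec (xhat k - ε k) i)
    (hsd : ∀ k ∈ S, c ⬝ᵥ (xhat k - ε k) = b ⬝ᵥ y)
    (hτ : ∀ k ∈ S, ‖ε k‖ ≤ τ)
    (hcard : θ * K ≤ S.card)
    (hc : c ≠ 0) :
    ∃ i0 : Fin m,
      A.transpose.mulVec (Pi.single i0 1) = A i0 ∧
      (∀ i, 0 ≤ (Pi.single i0 1 : Fin m → ℝ) i) ∧
      (∀ k ∈ S, ∀ i, b i ≤ A.mulVec (xhat k - ε k) i) ∧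
      (∀ k ∈ S, A i0 ⬝ᵥ (xhat k - ε k) = b ⬝ᵥ (Pi.single i0 1 : Fin m → ℝ)) ∧
      (∀ k ∈ S, ‖ε k‖ ≤ τ) ∧
      θ * K ≤ S.card := by
  -- y ≠ 0, pick i0 with y i0 > 0
  have hy0 : y ≠ 0 := by
    intro h
    apply hc
    rw [← hdual, h]
    simp [Matrix.mulVec_zero]
  obtain ⟨i0, hi0⟩ := Function.ne_iff.mp hy0
  have hi0pos : 0 < y i0 := lt_of_le_of_ne (hy i0) (by simpa [eq_comm] using hi0)
  refine ⟨i0, ?_, ?_, hfeas, ?_, hτ, hcard⟩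
  · funext j
    simp [Matrix.mulVec, dotProduct, Matrix.transpose_apply, Pi.single_apply]
  · intro i
    by_cases h : i = i0 <;> simp [Pi.single_apply, h]
  · intro k hk
    set x := xhat k - ε k with hx
    have key : c ⬝ᵥ x = y ⬝ᵥ A.mulVec x := by
      rw [← hdual, Matrix.mulVec_transpose, ← Matrix.dotProduct_mulVec]
    have hsum : ∑ i, y i * (A.mulVec x i - b i) = 0 := by
      have : y ⬝ᵥ A.mulVec x - y ⬝ᵥ b = 0 := by
        rw [← key, hsd k hk, dotProduct_comm]
        ring
      simpa [dotProduct, mul_sub, Finset.sum_sub_distrib] using this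
    have hzero : ∀ i ∈ Finset.univ, y i * (A.mulVec x i - b i) = 0 := by
      rw [← Finset.sum_eq_zero_iff_of_nonneg]
      · exact hsum
      · intro i _
        exact mul_nonneg (hy i) (sub_nonneg.mpr (hfeas k hk i))
    have := hzero i0 (Finset.mem_univ i0)
    have hxi : A.mulVec x i0 = b i0 := by
      rcases mul_eq_zero.mp this with h | h
      · exact absurd h (ne_of_gt hi0pos)
      · linarith [sub_eq_zero.mp h]
    have : A i0 ⬝ᵥ x = b i0 := hxi
    rw [this]
    simp [dotProduct, Pi.single_apply]
end

section
/- Let A ∈ ℝ^{m×n} with rows aⁱ, b ∈ ℝᵐ, data x̂¹,…,x̂ᴷ, τ ≥ 0, θ ∈ [0,1], and constants M₁, M₂ sufficiently large. Suppose (v̄, ū, {ε̄ᵏ}) with v̄ ∈ {0,1}ᵐ, ū ∈ {0,1}ᴷ satisfies: bᵢ ≤ (aⁱ)ᵀ(x̂ᵏ − ε̄ᵏ) ≤ bᵢ + M₁(1 − v̄ᵢ) for all i, k; ‖ε̄ᵏ‖ ≤ τ + M₂(1 − ūₖ) for all k; and ∑ₖ ūₖ ≥ θK. Let c̄ be any nonzero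 conic combination c̄ = ∑_{i : v̄ᵢ=1} λᵢ aⁱ with λᵢ ≥ 0. Then setting ȳᵢ = λᵢ for i with v̄ᵢ = 1 and ȳᵢ = 0 otherwise, and S̄ = {k : ūₖ = 1}, the tuple (c̄, {ε̄ᵏ}, ȳ, S̄) satisfies: Aᵀȳ = c̄, ȳ ≥ 0, A(x̂ᵏ − ε̄ᵏ) ≥ b, c̄ᵀ(x̂ᵏ − ε̄ᵏ) = bᵀȳ, and ‖ε̄ᵏ‖ ≤ τ for all k ∈ S̄, with |S̄| ≥ θK. -/
open Matrix

/-!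
The cost vector c̄ is `Aᵀ ȳ` by construction, and ȳ is supported on the rows with `v̄ᵢ = 1`,
where the big-M constraint collapses to `(aⁱ)ᵀ(x̂ᵏ - ε̄ᵏ) = bᵢ`. So complementary slackness
holds for every perturbed observation, which gives the strong-duality equation
`c̄ᵀ(x̂ᵏ - ε̄ᵏ) = bᵀȳ`. For `ūₖ = 1` the norm constraint loses its big-M term, and since `ū` is
0/1-valued, `∑ₖ ūₖ` is the number of selected observations.
-/

namespace Matrix

variable {ι ν R : Type*} [Fintype ι]

theorem transpose_mulVec_ite_zero [CommSemiring R] (A : Matrix ι ν R) (p : ι → Prop)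
    [DecidablePred p] (y : ι → R) :
    Aᵀ *ᵥ (fun i => if p i then y i else 0) = ∑ i ∈ Finset.univ.filter p, y i • A i := by
  rw [mulVec_transpose, vecMul_eq_sum, Finset.sum_filter]
  simp only [ite_smul, zero_smul]

theorem transpose_mulVec_dotProduct_of_slack [Fintype ν] [CommSemiring R] (A : Matrix ι ν R)
    (b y : ι → R) (x : ν → R) (hslack : ∀ i, y i ≠ 0 → (A *ᵥ x) i = b i) :
    (Aᵀ *ᵥ y) ⬝ᵥ x = b ⬝ᵥ y := by
  rw [mulVec_transpose, ← dotProduct_mulVec, dotProduct_comm b]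
  refine Finset.sum_congr rfl fun i _ => ?_
  by_cases hy : y i = 0
  · simp [hy]
  · rw [hslack i hy]

end Matrix

theorem Finset.sum_eq_card_filter_eq_one {ι R : Type*} [AddCommMonoidWithOne R]
    (s : Finset ι) (u : ι → R) (hu : ∀ i, u i = 0 ∨ u i = 1) [DecidablePred (u · = 1)] :
    ∑ i ∈ s, u i = (s.filter (u · = 1)).card := by
  rw [← Finset.sum_boole]
  refine Finset.sum_congr rfl fun i _ => ?_
  rcases hu i with h | h <;> simp [h]

theorem mip_to_qio_feasible_general {m n K : ℕ}
    (A : Matrix (Fin m) (Fin n) ℝ) (b : Fin m → ℝ)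
    (xhat : Fin K → (Fin n → ℝ)) (τ θ M1 M2 : ℝ)
    (v : Fin m → ℝ) (u : Fin K → ℝ) (ε : Fin K → (Fin n → ℝ))
    (hu : ∀ k, u k = 0 ∨ u k = 1)
    (hbigM : ∀ i, ∀ k, b i ≤ A i ⬝ᵥ (xhat k - ε k) ∧
      A i ⬝ᵥ (xhat k - ε k) ≤ b i + M1 * (1 - v i))
    (hεbd : ∀ k, ‖ε k‖ ≤ τ + M2 * (1 - u k))
    (hcard : θ * K ≤ ∑ k, u k)
    (lam : Fin m → ℝ) (hlam : ∀ i, 0 ≤ lam i)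
    (c : Fin n → ℝ)
    (hc : c = ∑ i ∈ Finset.univ.filter (fun i => v i = 1), lam i • A i) :
    let ybar : Fin m → ℝ := fun i => if v i = 1 then lam i else 0
    let S : Finset (Fin K) := Finset.univ.filter (fun k => u k = 1)
    A.transpose.mulVec ybar = c ∧
      (∀ i, 0 ≤ ybar i) ∧
      (∀ k ∈ S, ∀ i, b i ≤ A.mulVec (xhat k - ε k) i) ∧
      (∀ k ∈ S, c ⬝ᵥ (xhat k - ε k) = b ⬝ᵥ ybar) ∧
      (∀ k ∈ S, ‖ε k‖ ≤ τ) ∧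
      θ * K ≤ S.card := by
  intro ybar S
  have hdual : Aᵀ *ᵥ ybar = c := by rw [hc]; exact transpose_mulVec_ite_zero A _ lam
  have hslack : ∀ k i, ybar i ≠ 0 → (A *ᵥ (xhat k - ε k)) i = b i := by
    intro k i hy
    have hvi : v i = 1 := by by_contra h; simp [ybar, h] at hy
    have := hbigM i k
    rw [hvi, sub_self, mul_zero, add_zero] at this
    exact le_antisymm this.2 this.1
  refine ⟨hdual, fun i => ?_, fun k _ i => (hbigM i k).1, fun k _ => ?_, fun k hk => ?_, ?_⟩
  · by_cases h : v i = 1 <;> simp [ybar, h, hlam i]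
  · rw [← hdual]
    exact transpose_mulVec_dotProduct_of_slack A b ybar _ (hslack k)
  · simpa [(Finset.mem_filter.mp hk).2] using hεbd k
  · rwa [← Finset.sum_eq_card_filter_eq_one _ u hu]

/-- (⇐) direction of Theorem 1: from a feasible solution (v̄, ū, {ε̄ᵏ}) of the
big-M MIP reformulation, any nonzero conic combination c̄ of the rows aⁱ with
v̄ᵢ = 1 yields an inverse-feasible cost vector for QIO(K, τ, θ), witnessed by
duals ȳ and the same perturbations, on the selected set S̄ = {k : ūₖ = 1}. -/
theorem mip_to_qio_feasible {m n K : ℕ}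
    (A : Matrix (Fin m) (Fin n) ℝ) (b : Fin m → ℝ)
    (xhat : Fin K → (Fin n → ℝ)) (τ θ M1 M2 : ℝ)
    (hτ : 0 ≤ τ) (hM1 : 0 < M1) (hM2 : 0 < M2)
    (v : Fin m → ℝ) (u : Fin K → ℝ) (ε : Fin K → (Fin n → ℝ))
    (hv : ∀ i, v i = 0 ∨ v i = 1) (hu : ∀ k, u k = 0 ∨ u k = 1)
    (hbigM : ∀ i, ∀ k, b i ≤ A i ⬝ᵥ (xhat k - ε k) ∧
      A i ⬝ᵥ (xhat k - ε k) ≤ b i + M1 * (1 - v i))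
    (hεbd : ∀ k, ‖ε k‖ ≤ τ + M2 * (1 - u k))
    (hcard : θ * K ≤ ∑ k, u k)
    (lam : Fin m → ℝ) (hlam : ∀ i, 0 ≤ lam i)
    (c : Fin n → ℝ)
    (hc : c = ∑ i ∈ Finset.univ.filter (fun i => v i = 1), lam i • A i)
    (hc0 : c ≠ 0) :
    let ybar : Fin m → ℝ := fun i => if v i = 1 then lam i else 0
    let S : Finset (Fin K) := Finset.univ.filter (fun k => u k = 1)
    A.transpose.mulVec ybar = c ∧
      (∀ i, 0 ≤ ybar i) ∧
      (∀ k ∈ S, ∀ i, b i ≤ A.mulVec (xhat k - ε k) i) ∧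
      (∀ k ∈ S, c ⬝ᵥ (xhat k - ε k) = b ⬝ᵥ ybar) ∧
      (∀ k ∈ S, ‖ε k‖ ≤ τ) ∧
      θ * K ≤ S.card :=
  mip_to_qio_feasible_general A b xhat τ θ M1 M2 v u ε hu hbigM hεbd hcard lam hlam c hc
end
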